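/- Let f : ℝ^d → ℝ⁺ ∪ {+∞} be lower semicontinuous and x_0 a point with f(x_0) = 0. Assume there exist γ, δ > 0 such that every element x* of the Clarke subdifferential ∂^C f(x), taken over all x ∈ B(x_0, 2δ) with f(x) > 0, satisfies |x*| ≥ γ. Then for all x ∈ B(x_0, δ), the distance to the zero level set satisfies d_{{f=0}}(x) ≤ γ^{−1} f(x). -/

import Mathlib

/-!
Argue by contradiction: if `f x < c r` with `c < γ` and `r ≤ d_{{f=0}}(x)`, minimise the
penalised function `y ↦ f y + c √(‖y - x‖² + σ²)` over the closed ball `B̄(x, r)`, with `σ > 0`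
small. Since `f ≥ 0`, the minimiser `z` lies in the open ball, hence off `{f = 0}` and inside
`B(x₀, 2δ)`. The smoothed norm has a quadratic upper bound (this is why `σ > 0`), so
`-c (z - x) / √(‖z - x‖² + σ²)` is a proximal subgradient of `f` at `z`, of norm `< c < γ`.
-/

open Set Metric Filter Topology
open Classical

noncomputable section

variable {d : ℕ}

local notation "E" => EuclideanSpace ℝ (Fin d)

/-- Proximal subdifferential of an extended-real-valued function at a point where
it is finite (Definition 4.1). -/
def proxSubdiff (f : E → EReal) (x : E) : Set E :=
  {xs | f x ≠ ⊤ ∧ f x ≠ ⊥ ∧ ∃ a > (0:ℝ), ∃ b > (0:ℝ), ∀ h : E, ‖h‖ ≤ b →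
    f x + (((inner ℝ xs h : ℝ) - a * ‖h‖ ^ 2 : ℝ) : EReal) ≤ f (x + h)}

/-- Limiting (Mordukhovich) subdifferential (Definition 4.2). -/
def limSubdiff (f : E → EReal) (x : E) : Set E :=
  {xs | ∃ (xk : ℕ → E) (xsk : ℕ → E), (∀ k, xsk k ∈ proxSubdiff f (xk k)) ∧
    Tendsto xk atTop (𝓝 x) ∧ Tendsto (fun k => f (xk k)) atTop (𝓝 (f x)) ∧
    Tendsto xsk atTop (𝓝 xs)}

/-- Clarke subdifferential: closed convex hull of the limiting subdifferential
(Definition 4.3). -/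
def clarkeSubdiff (f : E → EReal) (x : E) : Set E :=
  closure (convexHull ℝ (limSubdiff f x))

lemma proxSubdiff_subset_limSubdiff (f : E → EReal) (x : E) :
    proxSubdiff f x ⊆ limSubdiff f x := fun xs hxs =>
  ⟨fun _ => x, fun _ => xs, fun _ => hxs, tendsto_const_nhds, tendsto_const_nhds,
    tendsto_const_nhds⟩

lemma proxSubdiff_subset_clarkeSubdiff (f : E → EReal) (x : E) :
    proxSubdiff f x ⊆ clarkeSubdiff f x :=
  (proxSubdiff_subset_limSubdiff f x).trans ((subset_convexHull ℝ _).trans subset_closure)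

lemma EReal.exists_nonneg_coe_eq {a : EReal} (h0 : 0 ≤ a) (htop : a ≠ ⊤) :
    ∃ t : ℝ, 0 ≤ t ∧ a = t :=
  ⟨a.toReal, EReal.toReal_nonneg h0,
    (EReal.coe_toReal htop (ne_bot_of_le_ne_bot EReal.zero_ne_bot h0)).symm⟩

section SmoothNorm

variable {F : Type*} [NormedAddCommGroup F] {σ : ℝ}

def smoothNorm (σ : ℝ) (w : F) : ℝ := √(‖w‖ ^ 2 + σ ^ 2)

lemma sq_smoothNorm (σ : ℝ) (w : F) : smoothNorm σ w ^ 2 = ‖w‖ ^ 2 + σ ^ 2 :=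
  Real.sq_sqrt (by positivity)

lemma norm_lt_smoothNorm (hσ : σ ≠ 0) (w : F) : ‖w‖ < smoothNorm σ w :=
  (Real.lt_sqrt (norm_nonneg w)).2 (by simpa using pow_pos (abs_pos.2 hσ) 2)

lemma smoothNorm_pos (hσ : σ ≠ 0) (w : F) : 0 < smoothNorm σ w :=
  (norm_nonneg w).trans_lt (norm_lt_smoothNorm hσ w)

lemma smoothNorm_zero (hσ : 0 ≤ σ) : smoothNorm σ (0 : F) = σ := by
  simp [smoothNorm, Real.sqrt_sq hσ]

lemma continuous_smoothNorm (σ : ℝ) : Continuous (smoothNorm σ : F → ℝ) := by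
  unfold smoothNorm
  fun_prop

lemma norm_div_smoothNorm_smul_lt [NormedSpace ℝ F] {c : ℝ} (hc : 0 < c) (hσ : σ ≠ 0) (w : F) :
    ‖(c / smoothNorm σ w) • w‖ < c := by
  have hq := smoothNorm_pos hσ w
  rw [norm_smul, Real.norm_of_nonneg (div_pos hc hq).le, div_mul_eq_mul_div,
    div_lt_iff₀ hq]
  exact mul_lt_mul_of_pos_left (norm_lt_smoothNorm hσ w) hc

lemma smoothNorm_add_le [InnerProductSpace ℝ F] (hσ : σ ≠ 0) (w h : F) :
    smoothNorm σ (w + h) ≤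
      smoothNorm σ w + (inner ℝ w h + ‖h‖ ^ 2 / 2) / smoothNorm σ w := by
  set q := smoothNorm σ w
  have hq : 0 < q := smoothNorm_pos hσ w
  set u := (inner ℝ w h + ‖h‖ ^ 2 / 2) / q
  have hu : u * q = inner ℝ w h + ‖h‖ ^ 2 / 2 := div_mul_cancel₀ _ hq.ne'
  have hsq : smoothNorm σ (w + h) ^ 2 = q ^ 2 + 2 * (u * q) := by
    rw [sq_smoothNorm, sq_smoothNorm, norm_add_sq_real, hu]
    ring
  have hqu : 0 ≤ q + u := by nlinarith [sq_nonneg (smoothNorm σ (w + h))]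
  refine abs_le_of_sq_le_sq' ?_ hqu |>.2
  nlinarith [sq_nonneg u]

end SmoothNorm

lemma neg_smul_mem_proxSubdiff_of_isMinOn {f : E → EReal} {x z : E} {m c σ r : ℝ}
    (hc : 0 < c) (hσ : σ ≠ 0) (hfz : f z = m)
    (hmin : IsMinOn (fun y => f y + ((c * smoothNorm σ (y - x) : ℝ) : EReal))
      (closedBall x r) z)
    (hz : ‖z - x‖ < r) :
    (-(c / smoothNorm σ (z - x))) • (z - x) ∈ proxSubdiff f z := by
  set w := z - x
  set q := smoothNorm σ w
  have hq : 0 < q := smoothNorm_pos hσ w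
  refine ⟨by simp [hfz], by simp [hfz], c / (2 * q), by positivity, r - ‖w‖, by linarith, ?_⟩
  intro h hh
  have hzh : z + h - x = w + h := by simp only [w]; abel
  have hmem : z + h ∈ closedBall x r := by
    rw [mem_closedBall, dist_eq_norm, hzh]
    linarith [norm_add_le w h]
  have hle : ((m + c * q : ℝ) : EReal) ≤
      f (z + h) + ((c * smoothNorm σ (w + h) : ℝ) : EReal) := by
    rw [EReal.coe_add, ← hfz, ← hzh]
    exact isMinOn_iff.1 hmin _ hmem
  have hpen : c * smoothNorm σ (w + h) ≤
      c * q - (inner ℝ ((-(c / q)) • w) h - c / (2 * q) * ‖h‖ ^ 2) :=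
    calc c * smoothNorm σ (w + h) ≤ c * (q + (inner ℝ w h + ‖h‖ ^ 2 / 2) / q) :=
          mul_le_mul_of_nonneg_left (smoothNorm_add_le hσ w h) hc.le
      _ = c * q - (inner ℝ ((-(c / q)) • w) h - c / (2 * q) * ‖h‖ ^ 2) := by
          rw [real_inner_smul_left]
          field_simp
          ring
  rw [hfz]
  generalize f (z + h) = b at hle ⊢
  induction b using EReal.rec with
  | bot => exact absurd (le_bot_iff.1 (hle.trans_eq (EReal.bot_add _))) (EReal.coe_ne_bot _)
  | top => exact le_top
  | coe p =>
    rw [← EReal.coe_add, EReal.coe_le_coe_iff]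
    rw [← EReal.coe_add, EReal.coe_le_coe_iff] at hle
    linarith

theorem exists_mem_ball_proxSubdiff_norm_lt {f : E → EReal} (hlsc : LowerSemicontinuous f)
    (hnonneg : ∀ y, 0 ≤ f y) {x : E} {c r : ℝ} (hc : 0 < c)
    (hfx : f x < ((c * r : ℝ) : EReal)) :
    ∃ z ∈ ball x r, ∃ xs ∈ proxSubdiff f z, ‖xs‖ < c := by
  obtain ⟨t, ht0, ht⟩ := EReal.exists_nonneg_coe_eq (hnonneg x) hfx.ne_top
  have htr : t < c * r := by rwa [ht, EReal.coe_lt_coe_iff] at hfx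
  have hr : 0 ≤ r := nonneg_of_mul_nonneg_right (ht0.trans htr.le) hc
  obtain ⟨σ, hσ, htσ⟩ : ∃ σ > 0, t + c * σ < c * r :=
    ⟨(c * r - t) / (2 * c), div_pos (by linarith) (by positivity), by field_simp; linarith⟩
  set G : E → EReal := fun y => f y + ((c * smoothNorm σ (y - x) : ℝ) : EReal)
  have hpen : Continuous fun y => ((c * smoothNorm σ (y - x) : ℝ) : EReal) :=
    continuous_coe_real_ereal.comp
      (continuous_const.mul ((continuous_smoothNorm σ).comp (continuous_sub_right x)))
  have hGlsc : LowerSemicontinuous G := hlsc.add' hpen.lowerSemicontinuous fun y =>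
    EReal.continuousAt_add (Or.inr (EReal.coe_ne_bot _)) (Or.inr (EReal.coe_ne_top _))
  obtain ⟨z, -, hmin⟩ := (hGlsc.lowerSemicontinuousOn _).exists_isMinOn
    ⟨x, mem_closedBall_self hr⟩ (isCompact_closedBall x r)
  have hGz : G z ≤ ((t + c * σ : ℝ) : EReal) := by
    simpa [G, ht, smoothNorm_zero hσ.le] using isMinOn_iff.1 hmin x (mem_closedBall_self hr)
  obtain ⟨m, hm0, hm⟩ := EReal.exists_nonneg_coe_eq (hnonneg z) fun htop =>
    EReal.coe_ne_top _ (top_le_iff.1 (by simpa only [G, htop, EReal.top_add_coe] using hGz))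
  have hq : smoothNorm σ (z - x) < r := by
    simp only [G, hm, ← EReal.coe_add, EReal.coe_le_coe_iff] at hGz
    exact lt_of_mul_lt_mul_left (by linarith) hc.le
  have hzx : ‖z - x‖ < r := (norm_lt_smoothNorm hσ.ne' _).trans hq
  refine ⟨z, mem_ball_iff_norm.2 hzx, _,
    neg_smul_mem_proxSubdiff_of_isMinOn hc hσ.ne' hm hmin hzx, ?_⟩
  rw [neg_smul, norm_neg]
  exact norm_div_smoothNorm_smul_lt hc hσ.ne' _

theorem ioffe_metric_estimate_general
    (f : E → EReal) (hlsc : LowerSemicontinuous f)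
    (hnonneg : ∀ x, 0 ≤ f x)
    (x0 : E) (hx0 : f x0 = 0)
    (ga dlt : ℝ) (hga : 0 < ga)
    (hsub : ∀ x ∈ ball x0 (2 * dlt), 0 < f x → ∀ xs ∈ clarkeSubdiff f x, ga ≤ ‖xs‖) :
    ∀ x ∈ ball x0 dlt,
      ((infDist x {z : E | f z = 0} : ℝ) : EReal) ≤ ((ga⁻¹ : ℝ) : EReal) * f x := by
  intro x hx
  by_cases htop : f x = ⊤
  · rw [htop, EReal.coe_mul_top_of_pos (inv_pos.2 hga)]
    exact le_top
  obtain ⟨t, ht0, ht⟩ := EReal.exists_nonneg_coe_eq (hnonneg x) htop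
  rw [ht, ← EReal.coe_mul, EReal.coe_le_coe_iff]
  set D := infDist x {z : E | f z = 0}
  by_contra! htD
  have hD : 0 < D := (by positivity : 0 ≤ ga⁻¹ * t).trans_lt htD
  obtain ⟨c, htc, hcga⟩ : ∃ c, t / D < c ∧ c < ga :=
    exists_between (by rwa [div_lt_iff₀ hD, ← inv_mul_lt_iff₀ hga])
  have hfx : f x < ((c * D : ℝ) : EReal) := by
    rw [ht, EReal.coe_lt_coe_iff]
    exact (div_lt_iff₀ hD).1 htc
  obtain ⟨z, hzx, xs, hxs, hxs_lt⟩ := exists_mem_ball_proxSubdiff_norm_lt hlsc hnonneg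
    ((div_nonneg ht0 hD.le).trans_lt htc) hfx
  have hzS : z ∉ {z : E | f z = 0} := notMem_of_dist_lt_infDist (by
    rw [dist_comm]
    exact mem_ball.1 hzx)
  have hz : z ∈ ball x0 (2 * dlt) := by
    have hDx : D ≤ dist x x0 := infDist_le_dist_of_mem hx0
    rw [mem_ball] at hx hzx ⊢
    linarith [dist_triangle z x x0]
  exact (hsub z hz ((hnonneg z).lt_of_ne' hzS) xs
    (proxSubdiff_subset_clarkeSubdiff f z hxs)).not_gt (hxs_lt.trans hcga)

/-- Lemma 4.7: if `f ≥ 0` is lsc, `f(x₀) = 0`, and every Clarke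
subgradient of `f` at points of `B(x₀, 2δ)` where `f > 0` has norm at least `γ`,
then `d_{{f=0}}(x) ≤ γ⁻¹ f(x)` on `B(x₀, δ)`. -/
theorem ioffe_metric_estimate
    (f : E → EReal) (hlsc : LowerSemicontinuous f)
    (hnonneg : ∀ x, 0 ≤ f x)
    (x0 : E) (hx0 : f x0 = 0)
    (ga dlt : ℝ) (hga : 0 < ga) (hdlt : 0 < dlt)
    (hsub : ∀ x ∈ ball x0 (2 * dlt), 0 < f x → ∀ xs ∈ clarkeSubdiff f x, ga ≤ ‖xs‖) :
    ∀ x ∈ ball x0 dlt,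
      ((infDist x {z : E | f z = 0} : ℝ) : EReal) ≤ ((ga⁻¹ : ℝ) : EReal) * f x :=
  ioffe_metric_estimate_general f hlsc hnonneg x0 hx0 ga dlt hga hsub
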